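/- Let γ and m be commuting diagonalizable automorphisms of a finite-dimensional vector space W over a valued field (k, ν), with every eigenvalue β of m satisfying ν(β − 1) > s(γ), where s(γ) = max over eigenvalues α of γ of max{0, ν(α−1)}. Suppose no eigenvalue of γ equals 1 (i.e. det(γ − 1) ≠ 0). Then det(γm − 1) ≠ 0 and moreover ν(det(γm − 1)) = ν(det(γ − 1)). -/

import Mathlib

/-!
Commuting diagonalizable endomorphisms have a common eigenbasis, in which `γ * m - 1` and `γ - 1`
are diagonal with entries `α * β - 1` and `α - 1`. Writing `α * β - 1 = (α - 1) * β + (β - 1)`,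
where `ν β = 0` and `ν ((α - 1) * β) = ν (α - 1) < ν (β - 1)`, each entry `α * β - 1` has the
valuation of `α - 1`, and the valuation of a determinant is the sum over the diagonal.
-/

open Module

namespace AddValuation

variable {R Γ₀ : Type*} [CommRing R] [LinearOrderedAddCommMonoidWithTop Γ₀] (ν : AddValuation R Γ₀)

theorem map_prod {ι : Type*} (s : Finset ι) (g : ι → R) :
    ν (∏ i ∈ s, g i) = ∑ i ∈ s, ν (g i) := by
  classical
  induction s using Finset.induction_on with
  | empty => simp
  | insert a s ha ih => rw [Finset.prod_insert ha, Finset.sum_insert ha, ν.map_mul, ih]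

theorem map_eq_zero_of_pos_map_sub_one {β : R} (hβ : 0 < ν (β - 1)) : ν β = 0 := by
  have h := ν.map_add_eq_of_lt_left (x := 1) (y := β - 1) (by rwa [ν.map_one])
  rwa [add_sub_cancel, ν.map_one] at h

theorem map_mul_sub_one_of_lt {α β : R} (hβ : 0 < ν (β - 1)) (hαβ : ν (α - 1) < ν (β - 1)) :
    ν (α * β - 1) = ν (α - 1) := by
  have hβ0 := ν.map_eq_zero_of_pos_map_sub_one hβ
  rw [show α * β - 1 = (α - 1) * β + (β - 1) by ring,
    ν.map_add_eq_of_lt_left (by rwa [ν.map_mul, hβ0, add_zero]), ν.map_mul, hβ0, add_zero]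

end AddValuation

theorem LinearMap.det_eq_prod_of_apply_eq_smul {R M ι : Type*} [CommRing R] [AddCommGroup M]
    [Module R M] [Fintype ι] (b : Basis ι R M) {f : End R M} {d : ι → R}
    (h : ∀ i, f (b i) = d i • b i) : LinearMap.det f = ∏ i, d i := by
  classical
  rw [← LinearMap.det_toMatrix b, ← Matrix.det_diagonal]
  congr 1
  ext i j
  rcases eq_or_ne i j with rfl | hij
  · simp [LinearMap.toMatrix_apply, h]
  · simp [LinearMap.toMatrix_apply, h, hij]

namespace Module.End

variable {K V : Type*} [Field K] [AddCommGroup V] [Module K V]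

theorem maxGenEigenspace_eq_eigenspace_of_iSup_eigenspace_eq_top {f : End K V}
    (hf : ⨆ μ, f.eigenspace μ = ⊤) (μ : K) : f.maxGenEigenspace μ = f.eigenspace μ := by
  set E := ⨆ (β) (_ : β ≠ μ), f.eigenspace β
  have hE : E ≤ ⨆ (β) (_ : β ≠ μ), f.maxGenEigenspace β :=
    iSup₂_mono fun _ _ => eigenspace_le_maxGenEigenspace
  have hdisj : Disjoint (f.maxGenEigenspace μ) E :=
    (f.independent_maxGenEigenspace μ).mono_right hE
  calc f.maxGenEigenspace μ = (f.eigenspace μ ⊔ E) ⊓ f.maxGenEigenspace μ := by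
        rw [← iSup_split_single, hf, top_inf_eq]
    _ = f.eigenspace μ := by
        rw [sup_inf_assoc_of_le _ eigenspace_le_maxGenEigenspace, inf_comm, hdisj.eq_bot,
          sup_bot_eq]

variable {ι : Type*}

theorem iSup_iInf_eigenspace_eq_top_of_commute [FiniteDimensional K V] {f : ι → End K V}
    (hcomm : Pairwise fun i j ↦ Commute (f i) (f j)) (hf : ∀ i, ⨆ μ, (f i).eigenspace μ = ⊤) :
    ⨆ χ : ι → K, ⨅ i, (f i).eigenspace (χ i) = ⊤ := by
  have hmax (i : ι) := maxGenEigenspace_eq_eigenspace_of_iSup_eigenspace_eq_top (hf i)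
  simpa only [hmax] using
    iSup_iInf_maxGenEigenspace_eq_top_of_iSup_maxGenEigenspace_eq_top_of_commute f hcomm
      fun i ↦ by simpa only [hmax] using hf i

theorem iSupIndep_iInf_eigenspace_of_commute {f : ι → End K V}
    (hcomm : Pairwise fun i j ↦ Commute (f i) (f j)) :
    iSupIndep fun χ : ι → K ↦ ⨅ i, (f i).eigenspace (χ i) := by
  refine (independent_iInf_maxGenEigenspace_of_forall_mapsTo f fun i j μ ↦
    mapsTo_maxGenEigenspace_of_comm ?_ μ).mono fun χ ↦ iInf_mono fun i ↦
      eigenspace_le_maxGenEigenspace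
  rcases eq_or_ne j i with rfl | hji
  · exact Commute.refl _
  · exact hcomm hji

theorem exists_basis_hasEigenvector_of_commute [FiniteDimensional K V] {f : ι → End K V}
    (hcomm : Pairwise fun i j ↦ Commute (f i) (f j)) (hf : ∀ i, ⨆ μ, (f i).eigenspace μ = ⊤) :
    ∃ (s : Set V) (b : Basis s K V) (χ : s → ι → K),
      ∀ j i, (f i).HasEigenvector (χ j i) (b j) := by
  classical
  have hint := DirectSum.isInternal_submodule_of_iSupIndep_of_iSup_eq_top
    (iSupIndep_iInf_eigenspace_of_commute hcomm) (iSup_iInf_eigenspace_eq_top_of_commute hcomm hf)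
  set B := hint.collectedBasis fun χ ↦ Free.chooseBasis K _
  have hB : ∀ j : Set.range B, ∀ i, ∃ μ, (f i).HasEigenvector μ (B.reindexRange j) := by
    rintro ⟨-, p, rfl⟩ i
    rw [B.reindexRange_apply]
    exact ⟨p.1 i, iInf_le (fun i ↦ (f i).eigenspace (p.1 i)) i (hint.collectedBasis_mem _ p),
      B.ne_zero p⟩
  choose χ hχ using hB
  exact ⟨_, _, χ, hχ⟩

end Module.End

theorem det_gamma_m_sub_one_general
    (k : Type*) [Field k] (ν : AddValuation k (WithTop ℤ))
    (W : Type*) [AddCommGroup W] [Module k W] [FiniteDimensional k W]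
    (γ m : Module.End k W) (hcomm : Commute γ m)
    (hγdiag : (⨆ α : k, γ.eigenspace α) = ⊤)
    (hmdiag : (⨆ β : k, m.eigenspace β) = ⊤)
    (c : WithTop ℤ)
    (hub : ∀ α : k, γ.HasEigenvalue α → max 0 (ν (α - 1)) ≤ c)
    (hmev : ∀ β : k, m.HasEigenvalue β → c < ν (β - 1))
    (hdet : LinearMap.det (γ - 1 : Module.End k W) ≠ 0) :
    LinearMap.det (γ * m - 1 : Module.End k W) ≠ 0 ∧
      ν (LinearMap.det (γ * m - 1 : Module.End k W))
        = ν (LinearMap.det (γ - 1 : Module.End k W)) := by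
  obtain ⟨s, b, χ, hχ⟩ :=
    Module.End.exists_basis_hasEigenvector_of_commute (f := ![γ, m])
    (by simp [Pairwise, Fin.forall_fin_two, hcomm, hcomm.symm]) (by simp [Fin.forall_fin_two, *])
  have hγ (j : s) : γ.HasEigenvector (χ j 0) (b j) := hχ j 0
  have hm (j : s) : m.HasEigenvector (χ j 1) (b j) := hχ j 1
  have : Fintype s := FiniteDimensional.fintypeBasisIndex b
  have hdetγ : LinearMap.det (γ - 1) = ∏ j, (χ j 0 - 1) :=
    LinearMap.det_eq_prod_of_apply_eq_smul b fun j ↦ by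
      simp [(hγ j).apply_eq_smul, sub_smul]
  have hdetγm : LinearMap.det (γ * m - 1) = ∏ j, (χ j 0 * χ j 1 - 1) :=
    LinearMap.det_eq_prod_of_apply_eq_smul b fun j ↦ by
      simp [(hγ j).apply_eq_smul, (hm j).apply_eq_smul, sub_smul, smul_smul, mul_comm]
  have hval : ν (LinearMap.det (γ * m - 1)) = ν (LinearMap.det (γ - 1)) := by
    rw [hdetγ, hdetγm, ν.map_prod, ν.map_prod]
    refine Finset.sum_congr rfl fun j _ ↦ ?_
    have hα := hub _ (Module.End.hasEigenvalue_of_hasEigenvector (hγ j))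
    have hβ := hmev _ (Module.End.hasEigenvalue_of_hasEigenvector (hm j))
    exact ν.map_mul_sub_one_of_lt ((le_max_left _ _).trans hα |>.trans_lt hβ)
      ((le_max_right _ _).trans hα |>.trans_lt hβ)
  refine ⟨fun h ↦ hdet ?_, hval⟩
  rwa [h, ν.map_zero, eq_comm, ν.top_iff] at hval

/-- Corollary `deepness cor` abstracted: if γ, m are commuting diagonalizable
automorphisms, every eigenvalue β of m satisfies ν(β − 1) > s(γ) (where c is an
upper bound for max{0, ν(α−1)} over eigenvalues α of γ), and det(γ − 1) ≠ 0,
then det(γm − 1) ≠ 0 and ν(det(γm − 1)) = ν(det(γ − 1)). -/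
theorem det_gamma_m_sub_one
    (k : Type*) [Field k] (ν : AddValuation k (WithTop ℤ))
    (W : Type*) [AddCommGroup W] [Module k W] [FiniteDimensional k W]
    (γ m : Module.End k W) (hcomm : Commute γ m)
    (hγbij : Function.Bijective γ) (hmbij : Function.Bijective m)
    (hγdiag : (⨆ α : k, γ.eigenspace α) = ⊤)
    (hmdiag : (⨆ β : k, m.eigenspace β) = ⊤)
    (c : WithTop ℤ)
    (hub : ∀ α : k, γ.HasEigenvalue α → max 0 (ν (α - 1)) ≤ c)
    (hmev : ∀ β : k, m.HasEigenvalue β → c < ν (β - 1))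
    (hdet : LinearMap.det (γ - 1 : Module.End k W) ≠ 0) :
    LinearMap.det (γ * m - 1 : Module.End k W) ≠ 0 ∧
      ν (LinearMap.det (γ * m - 1 : Module.End k W))
        = ν (LinearMap.det (γ - 1 : Module.End k W)) :=
  det_gamma_m_sub_one_general k ν W γ m hcomm hγdiag hmdiag c hub hmev hdet
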